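/- Let p ≥ 1, let h, g ∈ ℝ^p, A ∈ ℝ^{p×p} with I − A − g h^⊤ invertible with inverse M, and set w := M g. Let e_V : Ω → ℝ and e_X : Ω → ℝ^p be centered square-integrable random variables, and define V := h^⊤X + e_V and X := g V + A X + e_X via (V, X^⊤)^⊤ := (I − Ã)^{-1}(e_V, e_X^⊤)^⊤, where Ã is the block matrix [0, h^⊤; g, A]. Set σ² := Var(e_V), v_i := Cov(e_{X,i}, e_V), Σ_{ij} := Cov(e_{X,i}, e_{X,j}), and Σ̃ := Σ + v g^⊤ + g v^⊤. Then: (i) X = w e_V + M e_X almost surely; (ii) Cov(X, X) = σ² w w^⊤ + M Σ̃ M^⊤; and (iii) Cov(X, V) = Cov(X, X) h + σ² w + M v. -/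

import Mathlib

/-!
Substituting `V = hᵀX + e_V` into the equation for `X` gives `(I - A - g hᵀ) X = e_V g + e_X`,
so `X = M U` for the effective noise `U := e_V g + e_X`; this is (i). Second moments transform
as `E[(B X)(C Y)ᵀ] = B E[X Yᵀ] Cᵀ`, and `E[U Uᵀ] = σ² g gᵀ + Σ̃` by bilinearity, which gives (ii)
since `M g = w`. Finally `E[X V] = E[X Xᵀ] h + E[X e_V]` with `E[X e_V] = M E[U e_V] = σ² w + M v`.
-/

open MeasureTheory Matrix

section CrossMoment

variable {Ω : Type*} [MeasurableSpace Ω] {μ : Measure Ω} {ι m n : Type*} [Fintype ι]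

/-- `E[X Yᵀ]`; for centred `X`, `Y` this is the covariance matrix `Cov(X, Y)`. -/
noncomputable def crossMoment (μ : Measure Ω) (X : Ω → m → ℝ) (Y : Ω → n → ℝ) :
    Matrix m n ℝ :=
  of fun i j => ∫ ω, X ω i * Y ω j ∂μ

lemma crossMoment_apply (X : Ω → m → ℝ) (Y : Ω → n → ℝ) (i : m) (j : n) :
    crossMoment μ X Y i j = ∫ ω, X ω i * Y ω j ∂μ :=
  rfl

lemma transpose_crossMoment (X : Ω → m → ℝ) (Y : Ω → n → ℝ) :
    (crossMoment μ X Y)ᵀ = crossMoment μ Y X := by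
  ext i j
  simp only [transpose_apply, crossMoment_apply, mul_comm]

lemma memLp_dotProduct (c : ι → ℝ) {X : Ω → ι → ℝ} (hX : ∀ k, MemLp (X · k) 2 μ) :
    MemLp (fun ω => c ⬝ᵥ X ω) 2 μ :=
  memLp_finsetSum _ fun k _ => (hX k).const_mul (c k)

lemma memLp_mulVec_apply (B : Matrix m ι ℝ) {X : Ω → ι → ℝ} (hX : ∀ k, MemLp (X · k) 2 μ)
    (i : m) : MemLp (fun ω => (B *ᵥ X ω) i) 2 μ :=
  memLp_dotProduct (B i) hX

lemma integral_dotProduct_mul (c : ι → ℝ) {X : Ω → ι → ℝ} (hX : ∀ k, MemLp (X · k) 2 μ)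
    {f : Ω → ℝ} (hf : MemLp f 2 μ) :
    ∫ ω, (c ⬝ᵥ X ω) * f ω ∂μ = c ⬝ᵥ fun k => ∫ ω, X ω k * f ω ∂μ := by
  have hint : ∀ k, Integrable (fun ω => c k * (X ω k * f ω)) μ :=
    fun k => ((hX k).integrable_mul hf).const_mul _
  simp only [dotProduct, Finset.sum_mul, mul_assoc]
  rw [integral_finsetSum _ fun k _ => hint k]
  simp only [integral_const_mul]

lemma integral_mulVec_apply_mul (B : Matrix m ι ℝ) {X : Ω → ι → ℝ}
    (hX : ∀ k, MemLp (X · k) 2 μ) {f : Ω → ℝ} (hf : MemLp f 2 μ) (i : m) :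
    ∫ ω, (B *ᵥ X ω) i * f ω ∂μ = (B *ᵥ fun k => ∫ ω, X ω k * f ω ∂μ) i :=
  integral_dotProduct_mul (B i) hX hf

lemma crossMoment_mulVec_left (B : Matrix m ι ℝ) {X : Ω → ι → ℝ} {Y : Ω → n → ℝ}
    (hX : ∀ k, MemLp (X · k) 2 μ) (hY : ∀ j, MemLp (Y · j) 2 μ) :
    crossMoment μ (fun ω => B *ᵥ X ω) Y = B * crossMoment μ X Y := by
  ext i j
  exact integral_mulVec_apply_mul B hX (hY j) i

lemma crossMoment_mulVec_mulVec (B : Matrix m ι ℝ) (C : Matrix n ι ℝ) {X Y : Ω → ι → ℝ}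
    (hX : ∀ k, MemLp (X · k) 2 μ) (hY : ∀ k, MemLp (Y · k) 2 μ) :
    crossMoment μ (fun ω => B *ᵥ X ω) (fun ω => C *ᵥ Y ω) = B * crossMoment μ X Y * Cᵀ := by
  rw [crossMoment_mulVec_left B hX (memLp_mulVec_apply C hY), Matrix.mul_assoc,
    ← transpose_crossMoment, crossMoment_mulVec_left C hY hX, transpose_mul,
    transpose_crossMoment]

lemma integral_mul_dotProduct_add {X : Ω → ι → ℝ} (hX : ∀ k, MemLp (X · k) 2 μ) {f : Ω → ℝ}
    (hf : MemLp f 2 μ) (h : ι → ℝ) (i : ι) :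
    ∫ ω, X ω i * (h ⬝ᵥ X ω + f ω) ∂μ = (crossMoment μ X X *ᵥ h) i + ∫ ω, X ω i * f ω ∂μ := by
  have hsplit : ∀ ω, X ω i * (h ⬝ᵥ X ω + f ω) = (h ⬝ᵥ X ω) * X ω i + X ω i * f ω :=
    fun ω => by ring
  simp_rw [hsplit]
  rw [integral_add (f := fun ω => (h ⬝ᵥ X ω) * X ω i) (g := fun ω => X ω i * f ω)
    ((memLp_dotProduct h hX).integrable_mul (hX i)) ((hX i).integrable_mul hf),
    integral_dotProduct_mul h hX (hX i), ← vecMul_transpose, transpose_crossMoment]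
  rfl

end CrossMoment

lemma eq_mulVec_of_linear_system {R n : Type*} [CommRing R] [Fintype n] [DecidableEq n]
    {A M : Matrix n n R} {g h x e : n → R} {s ε : R}
    (hM : M * (1 - A - vecMulVec g h) = 1) (hs : s = h ⬝ᵥ x + ε)
    (hx : x = s • g + A *ᵥ x + e) :
    x = M *ᵥ (ε • g + e) := by
  have hreduced : (1 - A - vecMulVec g h) *ᵥ x = ε • g + e := by
    rw [sub_mulVec, sub_mulVec, one_mulVec, vecMulVec_mulVec, op_smul_eq_smul]
    nth_rewrite 1 [hx]
    rw [hs, add_smul]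
    abel
  rw [← hreduced, mulVec_mulVec, hM, one_mulVec]

section EffectiveNoise

variable {Ω : Type*} [MeasurableSpace Ω] {μ : Measure Ω} {ι : Type*}
  {a : Ω → ℝ} {e : Ω → ι → ℝ}

lemma memLp_smul_add_apply (ha : MemLp a 2 μ) (he : ∀ k, MemLp (e · k) 2 μ) (g : ι → ℝ)
    (k : ι) : MemLp (fun ω => (a ω • g + e ω) k) 2 μ :=
  (ha.mul_const (g k)).add (he k)

lemma integral_smul_add_apply_mul (ha : MemLp a 2 μ) (he : ∀ k, MemLp (e · k) 2 μ)
    (g : ι → ℝ) {f : Ω → ℝ} (hf : MemLp f 2 μ) (k : ι) :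
    ∫ ω, (a ω • g + e ω) k * f ω ∂μ = g k * ∫ ω, a ω * f ω ∂μ + ∫ ω, e ω k * f ω ∂μ := by
  have hsplit : ∀ ω, (a ω • g + e ω) k * f ω = g k * (a ω * f ω) + e ω k * f ω := by
    intro ω
    simp only [Pi.add_apply, Pi.smul_apply, smul_eq_mul]
    ring
  simp_rw [hsplit]
  rw [integral_add (f := fun ω => g k * (a ω * f ω)) (g := fun ω => e ω k * f ω)
    ((ha.integrable_mul hf).const_mul _) ((he k).integrable_mul hf), integral_const_mul]

lemma crossMoment_smul_add_self (ha : MemLp a 2 μ) (he : ∀ k, MemLp (e · k) 2 μ)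
    (g : ι → ℝ) :
    crossMoment μ (fun ω => a ω • g + e ω) (fun ω => a ω • g + e ω) =
      (∫ ω, a ω * a ω ∂μ) • vecMulVec g g + (crossMoment μ e e +
        vecMulVec (fun k => ∫ ω, e ω k * a ω ∂μ) g + vecMulVec g fun k => ∫ ω, e ω k * a ω ∂μ) := by
  ext i j
  rw [crossMoment_apply, integral_smul_add_apply_mul ha he g (memLp_smul_add_apply ha he g j)]
  simp_rw [mul_comm (a _), mul_comm (e _ i)]
  rw [integral_smul_add_apply_mul ha he g ha, integral_smul_add_apply_mul ha he g (he i)]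
  simp only [Matrix.add_apply, Matrix.smul_apply, vecMulVec_apply, crossMoment_apply, smul_eq_mul]
  simp_rw [mul_comm (e _ i)]
  ring

end EffectiveNoise

theorem stmt_4_general
    {Ω : Type*} [MeasurableSpace Ω] (μ : Measure Ω)
    (p : ℕ)
    (h g : Fin p → ℝ) (A : Matrix (Fin p) (Fin p) ℝ)
    (M : Matrix (Fin p) (Fin p) ℝ)
    (hM₂ : M * (1 - A - vecMulVec g h) = 1)
    (w : Fin p → ℝ) (hw : w = M *ᵥ g)
    (eV : Ω → ℝ) (eX : Ω → Fin p → ℝ)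
    (heV : MemLp eV 2 μ) (heX : ∀ i, MemLp (fun ω => eX ω i) 2 μ)
    (V : Ω → ℝ) (X : Ω → Fin p → ℝ)
    (hV : ∀ ω, V ω = h ⬝ᵥ X ω + eV ω)
    (hX : ∀ ω, X ω = V ω • g + A *ᵥ X ω + eX ω)
    (σ2 : ℝ) (hσ2 : σ2 = ∫ ω, eV ω * eV ω ∂μ)
    (v : Fin p → ℝ) (hv : ∀ i, v i = ∫ ω, eX ω i * eV ω ∂μ)
    (S : Matrix (Fin p) (Fin p) ℝ) (hS : ∀ i j, S i j = ∫ ω, eX ω i * eX ω j ∂μ)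
    (St : Matrix (Fin p) (Fin p) ℝ)
    (hStdef : St = S + vecMulVec v g + vecMulVec g v)
    (CovXX : Matrix (Fin p) (Fin p) ℝ)
    (hCovXX : ∀ i j, CovXX i j = ∫ ω, X ω i * X ω j ∂μ)
    (CovXV : Fin p → ℝ)
    (hCovXV : ∀ i, CovXV i = ∫ ω, X ω i * V ω ∂μ) :
    (∀ᵐ ω ∂μ, X ω = eV ω • w + M *ᵥ eX ω) ∧
      CovXX = σ2 • vecMulVec w w + M * St * Mᵀ ∧
      CovXV = CovXX *ᵥ h + σ2 • w + M *ᵥ v := by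
  set U : Ω → Fin p → ℝ := fun ω => eV ω • g + eX ω
  have hXU : ∀ ω, X ω = M *ᵥ U ω := fun ω => eq_mulVec_of_linear_system hM₂ (hV ω) (hX ω)
  have hU : ∀ k, MemLp (U · k) 2 μ := memLp_smul_add_apply heV heX g
  have hXL2 : ∀ i, MemLp (X · i) 2 μ := by simpa only [hXU] using memLp_mulVec_apply M hU
  have hS' : S = crossMoment μ eX eX := ext hS
  have hCovXX' : CovXX = crossMoment μ X X := ext hCovXX
  have hUU : crossMoment μ U U = σ2 • vecMulVec g g + St := by
    rw [crossMoment_smul_add_self heV heX g, ← hσ2, hStdef, ← funext hv, hS']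
  have hUeV : (fun k => ∫ ω, U ω k * eV ω ∂μ) = σ2 • g + v := by
    ext k
    rw [integral_smul_add_apply_mul heV heX g heV, ← hσ2, ← hv, mul_comm]
    rfl
  refine ⟨.of_forall fun ω => ?_, ?_, ?_⟩
  · rw [hXU, mulVec_add, mulVec_smul, hw]
  · rw [hCovXX', funext hXU, crossMoment_mulVec_mulVec M M hU hU, hUU, Matrix.mul_add,
      Matrix.add_mul, Matrix.mul_smul, Matrix.smul_mul, mul_vecMulVec, vecMulVec_mul,
      vecMul_transpose, ← hw]
  · ext i
    have hXeV : ∫ ω, X ω i * eV ω ∂μ = (M *ᵥ (σ2 • g + v)) i := by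
      simp only [hXU, ← hUeV, integral_mulVec_apply_mul M hU heV]
    simp_rw [hCovXV, hV, integral_mul_dotProduct_add hXL2 heV h i, hXeV, ← hCovXX', mulVec_add,
      mulVec_smul, ← hw, add_assoc]
    rfl

/-- For the linear system `V = hᵀ X + e_V`, `X = g V + A X + e_X`
(i.e. `(V, X) = (I − Ã)⁻¹ (e_V, e_X)` with `Ã = [0, hᵀ; g, A]`, encoded via the inverse
`M` of `I − A − g hᵀ`), with `w = M g`, `σ² = Var(e_V)`, `v = Cov(e_X, e_V)`,
`Σ = Cov(e_X, e_X)`, and `Σ̃ = Σ + v gᵀ + g vᵀ`: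
(i) `X = w e_V + M e_X` almost surely;
(ii) `Cov(X, X) = σ² w wᵀ + M Σ̃ Mᵀ`;
(iii) `Cov(X, V) = Cov(X, X) h + σ² w + M v`. -/
theorem stmt_4
    {Ω : Type*} [MeasurableSpace Ω] (μ : Measure Ω) [IsProbabilityMeasure μ]
    (p : ℕ) (hp : 1 ≤ p)
    (h g : Fin p → ℝ) (A : Matrix (Fin p) (Fin p) ℝ)
    (M : Matrix (Fin p) (Fin p) ℝ)
    (hM₁ : (1 - A - vecMulVec g h) * M = 1)
    (hM₂ : M * (1 - A - vecMulVec g h) = 1)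
    (w : Fin p → ℝ) (hw : w = M *ᵥ g)
    (eV : Ω → ℝ) (eX : Ω → Fin p → ℝ)
    (heV : MemLp eV 2 μ) (heX : ∀ i, MemLp (fun ω => eX ω i) 2 μ)
    (heV0 : ∫ ω, eV ω ∂μ = 0) (heX0 : ∀ i, ∫ ω, eX ω i ∂μ = 0)
    (V : Ω → ℝ) (X : Ω → Fin p → ℝ)
    (hV : ∀ ω, V ω = h ⬝ᵥ X ω + eV ω)
    (hX : ∀ ω, X ω = V ω • g + A *ᵥ X ω + eX ω)
    (σ2 : ℝ) (hσ2 : σ2 = ∫ ω, eV ω * eV ω ∂μ)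
    (v : Fin p → ℝ) (hv : ∀ i, v i = ∫ ω, eX ω i * eV ω ∂μ)
    (S : Matrix (Fin p) (Fin p) ℝ) (hS : ∀ i j, S i j = ∫ ω, eX ω i * eX ω j ∂μ)
    (St : Matrix (Fin p) (Fin p) ℝ)
    (hStdef : St = S + vecMulVec v g + vecMulVec g v)
    (CovXX : Matrix (Fin p) (Fin p) ℝ)
    (hCovXX : ∀ i j, CovXX i j = ∫ ω, X ω i * X ω j ∂μ)
    (CovXV : Fin p → ℝ)
    (hCovXV : ∀ i, CovXV i = ∫ ω, X ω i * V ω ∂μ) :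
    (∀ᵐ ω ∂μ, X ω = eV ω • w + M *ᵥ eX ω) ∧
      CovXX = σ2 • vecMulVec w w + M * St * Mᵀ ∧
      CovXV = CovXX *ᵥ h + σ2 • w + M *ᵥ v :=
  stmt_4_general μ p h g A M hM₂ w hw eV eX heV heX V X hV hX σ2 hσ2 v hv S hS St hStdef CovXX
    hCovXX CovXV hCovXV
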